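/- arXiv:2403.06971 — 3 statements merged into one kernel-verified Lean document; each statement's English description precedes it below -/
import Mathlib

section
/- Suppose ℓ* ∈ {r+1, …, d} satisfies (ℓ* − r)/λ_{ℓ*} ≤ Σ_{i=1}^{ℓ*}(1/λ_i) and (ℓ* = d or Σ_{i=1}^{ℓ*}(1/λ_i) ≤ (ℓ* − r)/λ_{ℓ*+1}), where λ_i = λ_i(Σ^{1/2} S Σ^{1/2}). Let v_1, …, v_d be an orthonormal eigenbasis of Σ^{1/2} S Σ^{1/2} ordered by nonincreasing eigenvalue. Then there exist m ≤ ℓ* + 1 subsets I_1, …, I_m ⊆ {1, …, ℓ*}, each of cardinality r, and weights p_1, …, p_m ≥ 0 with Σ_j p_j = 1, such that with R_j ∈ ℝ^{d×r} whose columns are Σ^{-1/2} v_i for i ∈ I_j, each R_jᵀ Σ R_j is invertible and for every f ∈ F_S one has Σ_{j=1}^{m} p_j · regret(R_j, f) ≤ (ℓ* − r)/Σ_{i=1}^{ℓ*}(1/λ_i). -/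
/-!
Put `B = Σ^{1/2} V` and `W = Σ^{-1/2} V`. Then `Σ = B Bᵀ`, `Bᵀ W = 1` and `Bᵀ S B = diag λ`, so for
the matrix `R` formed by the columns of `W` indexed by `I` one gets `regret(R, f) = ∑_{i ∉ I} gᵢ²`
with `g = Bᵀ f`, while `fᵀ S⁻¹ f = ∑ᵢ gᵢ² / λᵢ`.

With the water level `T = (ℓ* - r) / ∑_{i ≤ ℓ*} 1/λᵢ`, the two conditions on `ℓ*` say that
`λᵢ ≥ T` for `i ≤ ℓ*` and `λᵢ ≤ T` beyond, so `qᵢ = max(0, 1 - T/λᵢ)` lies in the hypersimplex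
`{0 ≤ q ≤ 1, ∑ q = r}` and vanishes beyond `ℓ*`. The hypersimplex is the convex hull of the
indicator vectors of `r`-sets (peel off a vertex until one more coordinate is integral), and
Carathéodory in dimension `ℓ*` writes `q` with at most `ℓ* + 1` of them. Averaging the regrets
with these weights gives `∑ᵢ (1 - qᵢ) gᵢ² ≤ T ∑ᵢ gᵢ² / λᵢ ≤ T`.
-/

open Matrix Finset

def hypersimplex (ι : Type*) [Fintype ι] (r : ℕ) : Set (ι → ℝ) :=
  {q | (∀ i, q i ∈ Set.Icc 0 1) ∧ ∑ i, q i = r}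

def hypersimplexVertices (ι : Type*) (r : ℕ) : Set (ι → ℝ) :=
  {x | ∃ A : Finset ι, #A = r ∧ (A : Set ι).indicator 1 = x}

section Hypersimplex

variable {ι : Type*}

section Peel

variable [DecidableEq ι]

noncomputable def peel (q : ι → ℝ) (A : Finset ι) (ε : ℝ) : ι → ℝ :=
  fun i => if i ∈ A then (q i - ε) / (1 - ε) else q i / (1 - ε)

/-- The largest `ε` for which coordinate `i` of `peel q A ε` stays in `[0, 1]`. -/
def slack (q : ι → ℝ) (A : Finset ι) (i : ι) : ℝ :=
  if i ∈ A then q i else 1 - q i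

theorem eq_smul_indicator_add_smul_peel (q : ι → ℝ) (A : Finset ι) {ε : ℝ} (hε : ε ≠ 1) :
    q = ε • (A : Set ι).indicator 1 + (1 - ε) • peel q A ε := by
  have : 1 - ε ≠ 0 := sub_ne_zero.mpr hε.symm
  funext i
  by_cases hi : i ∈ A <;> simp [peel, hi] <;> field_simp
  ring

theorem slack_pos {q : ι → ℝ} {A : Finset ι} (hq1 : ∀ i, q i ≤ 1) (hA1 : ∀ i, q i = 1 → i ∈ A)
    (hA0 : ∀ i ∈ A, 0 < q i) (i : ι) : 0 < slack q A i := by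
  by_cases hi : i ∈ A
  · simpa [slack, hi] using hA0 i hi
  · simpa [slack, hi] using lt_of_le_of_ne (hq1 i) fun h => hi (hA1 i h)

theorem exists_slack_lt_one {q : ι → ℝ} {A : Finset ι} (hq01 : ∀ i, q i ∈ Set.Icc 0 1)
    (hne : q ≠ (A : Set ι).indicator 1) : ∃ i, slack q A i < 1 := by
  obtain ⟨i, hi⟩ := Function.ne_iff.mp hne
  refine ⟨i, ?_⟩
  by_cases hiA : i ∈ A
  · simpa [slack, hiA] using lt_of_le_of_ne (hq01 i).2 (by simpa [hiA] using hi)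
  · simpa [slack, hiA] using lt_of_le_of_ne (hq01 i).1 (by simpa [hiA, eq_comm] using hi)

end Peel

variable [Fintype ι]

noncomputable def fracSupport (q : ι → ℝ) : Finset ι :=
  {i | q i ∈ Set.Ioo 0 1}

theorem exists_card_eq_between_of_mem_hypersimplex {r : ℕ} {q : ι → ℝ}
    (hq : q ∈ hypersimplex ι r) :
    ∃ A : Finset ι, #A = r ∧ (∀ i, q i = 1 → i ∈ A) ∧ ∀ i ∈ A, 0 < q i := by
  classical
  obtain ⟨hq01, hsum⟩ := hq
  have hones : (#{i | q i = 1} : ℝ) ≤ r := by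
    rw [← hsum, natCast_card_filter]
    exact sum_le_sum fun i _ => by split_ifs with h <;> simp [h, (hq01 i).1]
  have hpos : (r : ℝ) ≤ #{i | 0 < q i} := by
    rw [← hsum, natCast_card_filter]
    exact sum_le_sum fun i _ => by
      split_ifs with h
      · exact (hq01 i).2
      · exact not_lt.mp h
  obtain ⟨A, hA1, hA0, hA⟩ := exists_subsuperset_card_eq (s := {i | q i = 1}) (t := {i | 0 < q i})
    (fun i hi => by simp_all) (by exact_mod_cast hones) (by exact_mod_cast hpos)
  exact ⟨A, hA, fun i hi => hA1 (by simpa using hi), fun i hi => by simpa using hA0 hi⟩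

variable [DecidableEq ι]

theorem peel_mem_hypersimplex {r : ℕ} {q : ι → ℝ} {A : Finset ι} {ε : ℝ}
    (hq : q ∈ hypersimplex ι r) (hA : #A = r) (hε : ε < 1) (hslack : ∀ i, ε ≤ slack q A i) :
    peel q A ε ∈ hypersimplex ι r := by
  have hε1 : 0 < 1 - ε := by linarith
  refine ⟨fun i => ?_, ?_⟩
  · have hi := hslack i
    have hq1 := (hq.1 i).2
    by_cases hiA : i ∈ A
    · simp only [slack, hiA, if_true] at hi
      simp only [peel, hiA, if_true, Set.mem_Icc, div_le_one hε1]
      exact ⟨div_nonneg (by linarith) hε1.le, by linarith⟩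
    · simp only [slack, hiA, if_false] at hi
      simp only [peel, hiA, if_false, Set.mem_Icc, div_le_one hε1]
      exact ⟨div_nonneg (hq.1 i).1 hε1.le, by linarith⟩
  · have hsplit : ∀ i, peel q A ε i = (q i - ε * (A : Set ι).indicator 1 i) / (1 - ε) := fun i => by
      by_cases hiA : i ∈ A <;> simp [peel, hiA]
    simp only [hsplit, ← sum_div, sum_sub_distrib, ← mul_sum, hq.2]
    field_simp
    simp [Set.indicator_apply, hA]
    ring

theorem fracSupport_peel_ssubset {q : ι → ℝ} {A : Finset ι} {k : ι}
    (hk : slack q A k ∈ Set.Ioo 0 1) : fracSupport (peel q A (slack q A k)) ⊂ fracSupport q := by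
  have hε1 : 0 < 1 - slack q A k := by linarith [hk.2]
  have hk_mem : k ∈ fracSupport q := by
    simp only [fracSupport, mem_filter, mem_univ, true_and]
    by_cases hkA : k ∈ A
    · simpa [slack, hkA] using hk
    · simp only [slack, hkA, if_false, Set.mem_Ioo] at hk ⊢
      constructor <;> linarith [hk.1, hk.2]
  refine Finset.ssubset_of_subset_of_ssubset (fun i hi => ?_) (erase_ssubset hk_mem)
  simp only [fracSupport, mem_filter, mem_univ, true_and, mem_erase, Set.mem_Ioo] at hi ⊢
  by_cases hiA : i ∈ A
  · simp only [peel, hiA, if_true, lt_div_iff₀ hε1, div_lt_one hε1] at hi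
    refine ⟨fun hik => ?_, by linarith [hk.1], by linarith⟩
    subst hik
    simp only [slack, hiA, if_true] at hi
    linarith
  · simp only [peel, hiA, if_false, lt_div_iff₀ hε1, div_lt_one hε1] at hi
    refine ⟨fun hik => ?_, by linarith, by linarith [hk.1]⟩
    subst hik
    simp only [slack, hiA, if_false] at hi
    linarith

theorem hypersimplex_subset_convexHull (r : ℕ) :
    hypersimplex ι r ⊆ convexHull ℝ (hypersimplexVertices ι r) := by
  intro q hq
  induction hn : #(fracSupport q) using Nat.strong_induction_on generalizing q with
  | _ n ih =>
  obtain ⟨A, hA, hA1, hA0⟩ := exists_card_eq_between_of_mem_hypersimplex hq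
  have hA_mem : (A : Set ι).indicator 1 ∈ convexHull ℝ (hypersimplexVertices ι r) :=
    subset_convexHull ℝ _ ⟨A, hA, rfl⟩
  by_cases hne : q = (A : Set ι).indicator 1
  · exact hne ▸ hA_mem
  obtain ⟨i₀, hi₀⟩ := exists_slack_lt_one hq.1 hne
  -- stepping by the minimal slack keeps `peel` in the hypersimplex and makes coordinate `k`
  -- integral
  obtain ⟨k, -, hk⟩ := univ.exists_min_image (slack q A) ⟨i₀, mem_univ _⟩
  have hε : slack q A k ∈ Set.Ioo 0 1 :=
    ⟨slack_pos (fun i => (hq.1 i).2) hA1 hA0 k, (hk i₀ (mem_univ _)).trans_lt hi₀⟩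
  have hpeel := peel_mem_hypersimplex hq hA hε.2 fun i => hk i (mem_univ _)
  rw [eq_smul_indicator_add_smul_peel q A hε.2.ne]
  exact convex_convexHull ℝ _ hA_mem
    (ih _ (hn ▸ card_lt_card (fracSupport_peel_ssubset hε)) hpeel rfl) hε.1.le
    (by linarith [hε.2]) (by ring)

theorem exists_sum_smul_indicator_eq_of_mem_hypersimplex {r : ℕ} {q : ι → ℝ}
    (hq : q ∈ hypersimplex ι r) :
    ∃ m ≤ Fintype.card ι + 1, ∃ (I : Fin m → Finset ι) (p : Fin m → ℝ),
      (∀ j, #(I j) = r) ∧ (∀ j, 0 ≤ p j) ∧ ∑ j, p j = 1 ∧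
      ∑ j, p j • (I j : Set ι).indicator 1 = q := by
  obtain ⟨κ, _, z, w, hz, hai, hw, hw1, hwz⟩ :=
    eq_pos_convex_span_of_mem_convexHull (hypersimplex_subset_convexHull r hq)
  choose A hA hAz using fun k => hz ⟨k, rfl⟩
  have hcard : Fintype.card κ ≤ Fintype.card ι + 1 := by
    rw [← Module.finrank_fintype_fun_eq_card ℝ (η := ι)]
    exact hai.card_le_finrank_succ.trans (Nat.succ_le_succ (Submodule.finrank_le _))
  set σ := Fintype.equivFin κ
  refine ⟨_, hcard, fun j => A (σ.symm j), fun j => w (σ.symm j), fun j => hA _,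
    fun j => (hw _).le, ?_, ?_⟩
  · rw [σ.symm.sum_comp w, hw1]
  · rw [σ.symm.sum_comp (fun k => w k • (A k : Set ι).indicator 1), ← hwz]
    simp only [hAz]

theorem exists_sum_smul_indicator_eq_of_mem_hypersimplex_of_support {r : ℕ} {q : ι → ℝ}
    (hq : q ∈ hypersimplex ι r) (s : Finset ι) (hs : ∀ i ∉ s, q i = 0) :
    ∃ m ≤ #s + 1, ∃ (I : Fin m → Finset ι) (p : Fin m → ℝ),
      (∀ j, #(I j) = r) ∧ (∀ j, I j ⊆ s) ∧ (∀ j, 0 ≤ p j) ∧ ∑ j, p j = 1 ∧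
      ∑ j, p j • (I j : Set ι).indicator 1 = q := by
  have hqs : (fun i : s => q i) ∈ hypersimplex s r := by
    refine ⟨fun i => hq.1 i, ?_⟩
    rw [sum_coe_sort s q, sum_subset (subset_univ s) fun i _ hi => hs i hi, hq.2]
  obtain ⟨m, hm, I, p, hI, hp, hp1, hpq⟩ := exists_sum_smul_indicator_eq_of_mem_hypersimplex hqs
  refine ⟨m, by simpa using hm, fun j => (I j).map (Function.Embedding.subtype _), p,
    fun j => by simp [hI j], fun j i hi => ?_, hp, hp1, funext fun i => ?_⟩
  · obtain ⟨x, -, rfl⟩ := mem_map.mp hi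
    exact x.2
  by_cases hi : i ∈ s
  · rw [← congrFun hpq ⟨i, hi⟩]
    simp only [Finset.sum_apply, Pi.smul_apply]
    refine sum_congr rfl fun j _ => congrArg _ ?_
    have hmem : i ∈ Subtype.val '' (I j : Set s) ↔ ⟨i, hi⟩ ∈ I j :=
      Subtype.val_injective.mem_set_image (a := ⟨i, hi⟩)
    classical
    simp only [Set.indicator_apply, coe_map, Function.Embedding.coe_subtype, hmem, mem_coe,
      Pi.one_apply]
  · simp [hi, hs i hi]

theorem sum_mul_sum_compl_le {κ : Type*} [Fintype κ] (I : κ → Finset ι) {p : κ → ℝ}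
    (hp1 : ∑ j, p j = 1) {x c : ι → ℝ} (hx : ∀ i, 0 ≤ x i)
    (hc : ∀ i, 1 - (∑ j, p j • (I j : Set ι).indicator 1) i ≤ c i) :
    ∑ j, p j * ∑ i ∈ (I j)ᶜ, x i ≤ ∑ i, c i * x i := by
  have hcompl : ∀ j, ∑ i ∈ (I j)ᶜ, x i = ∑ i, (1 - (I j : Set ι).indicator 1 i) * x i :=
    fun j => by simp [Set.indicator_apply, sub_mul, sum_ite_mem, ← sum_compl_add_sum (I j) x]
  calc ∑ j, p j * ∑ i ∈ (I j)ᶜ, x i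
      = ∑ i, (1 - (∑ j, p j • (I j : Set ι).indicator 1) i) * x i := by
        simp only [hcompl, mul_sum]
        rw [sum_comm]
        refine sum_congr rfl fun i _ => ?_
        simp only [Finset.sum_apply, Pi.smul_apply, smul_eq_mul, ← mul_assoc, ← sum_mul, mul_sub,
          mul_one, sum_sub_distrib, hp1]
    _ ≤ ∑ i, c i * x i := sum_le_sum fun i _ => mul_le_mul_of_nonneg_right (hc i) (hx i)

end Hypersimplex

theorem dotProduct_mul_mul_transpose_mulVec {n m : Type*} [Fintype n] [Fintype m]
    (A : Matrix n m ℝ) (M : Matrix m m ℝ) (f : n → ℝ) :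
    f ⬝ᵥ ((A * M * Aᵀ) *ᵥ f) = (Aᵀ *ᵥ f) ⬝ᵥ (M *ᵥ (Aᵀ *ᵥ f)) := by
  rw [← mulVec_mulVec, ← mulVec_mulVec, dotProduct_mulVec, ← mulVec_transpose]

section Regret

variable {n κ : Type*} [Fintype n] [DecidableEq n] {B W Sig : Matrix n n ℝ} {e : κ → n}

theorem transpose_mul_submatrix_eq (hBW : Bᵀ * W = 1) (e : κ → n) :
    Bᵀ * W.submatrix id e = (1 : Matrix n n ℝ).submatrix id e := by
  rw [← hBW, submatrix_mul _ _ id id e Function.bijective_id, submatrix_id_id]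

theorem submatrix_transpose_mul_eq (hBW : Bᵀ * W = 1) (e : κ → n) :
    (W.submatrix id e)ᵀ * B = ((1 : Matrix n n ℝ).submatrix id e)ᵀ := by
  rw [← transpose_mul_submatrix_eq hBW e, transpose_mul, transpose_transpose]

theorem submatrix_one_transpose_mul_self [DecidableEq κ] (he : Function.Injective e) :
    ((1 : Matrix n n ℝ).submatrix id e)ᵀ * (1 : Matrix n n ℝ).submatrix id e = 1 := by
  rw [transpose_submatrix, transpose_one, ← submatrix_mul _ _ e id e Function.bijective_id,
    Matrix.mul_one, submatrix_one e he]

theorem transpose_mul_mul_submatrix_eq_one [DecidableEq κ] (hSig : Sig = B * Bᵀ)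
    (hBW : Bᵀ * W = 1) (he : Function.Injective e) :
    (W.submatrix id e)ᵀ * Sig * W.submatrix id e = 1 := by
  rw [hSig, Matrix.mul_assoc, Matrix.mul_assoc, transpose_mul_submatrix_eq hBW,
    ← Matrix.mul_assoc, submatrix_transpose_mul_eq hBW, submatrix_one_transpose_mul_self he]

theorem dotProduct_regret_mulVec [Fintype κ] [DecidableEq κ] (hSig : Sig = B * Bᵀ)
    (hBW : Bᵀ * W = 1) (he : Function.Injective e) (f : n → ℝ) :
    f ⬝ᵥ ((Sig - Sig * W.submatrix id e * ((W.submatrix id e)ᵀ * Sig * W.submatrix id e)⁻¹ *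
      (W.submatrix id e)ᵀ * Sig) *ᵥ f) = ∑ i ∈ (univ.image e)ᶜ, (Bᵀ *ᵥ f) i ^ 2 := by
  set P := (1 : Matrix n n ℝ).submatrix id e
  have hregret : Sig - Sig * W.submatrix id e *
      ((W.submatrix id e)ᵀ * Sig * W.submatrix id e)⁻¹ * (W.submatrix id e)ᵀ * Sig =
      B * (1 - P * Pᵀ) * Bᵀ := by
    rw [transpose_mul_mul_submatrix_eq_one hSig hBW he, inv_one, Matrix.mul_one,
      Matrix.mul_assoc, hSig, ← Matrix.mul_assoc _ B, submatrix_transpose_mul_eq hBW,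
      Matrix.mul_assoc B, transpose_mul_submatrix_eq hBW]
    simp only [P, Matrix.mul_sub, Matrix.sub_mul, Matrix.mul_one, Matrix.mul_assoc]
  have hPg : ∀ g : n → ℝ, Pᵀ *ᵥ g = g ∘ e := fun g => by
    ext k
    simp [P, mulVec, dotProduct, one_apply]
  rw [hregret, dotProduct_mul_mul_transpose_mulVec]
  generalize Bᵀ *ᵥ f = g
  rw [sub_mulVec, one_mulVec, dotProduct_sub, ← mulVec_mulVec, dotProduct_mulVec,
    ← mulVec_transpose, hPg]
  simp only [dotProduct, Function.comp_apply]
  rw [← sum_compl_add_sum (univ.image e), sum_image fun _ _ _ _ h => he h]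
  simp [sq]

end Regret

section Congruence

variable {n : Type*} [Fintype n] [DecidableEq n] {B S : Matrix n n ℝ} {μ : n → ℝ}

theorem dotProduct_inv_mulVec_of_transpose_mul_mul_eq_diagonal (hB : IsUnit B)
    (hBSB : Bᵀ * S * B = diagonal μ) (hμ : ∀ i, μ i ≠ 0) (f : n → ℝ) :
    f ⬝ᵥ (S⁻¹ *ᵥ f) = ∑ i, (μ i)⁻¹ * (Bᵀ *ᵥ f) i ^ 2 := by
  have hdet : IsUnit B.det := (isUnit_iff_isUnit_det B).mp hB
  have hdetT : IsUnit Bᵀ.det := by rwa [det_transpose]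
  have hSinv : S⁻¹ = B * (diagonal μ)⁻¹ * Bᵀ := by
    rw [← hBSB, Matrix.mul_inv_rev, Matrix.mul_inv_rev, ← Matrix.mul_assoc, ← Matrix.mul_assoc,
      mul_nonsing_inv B hdet, Matrix.one_mul, Matrix.mul_assoc, nonsing_inv_mul _ hdetT,
      Matrix.mul_one]
  have hDinv : (diagonal μ)⁻¹ = diagonal μ⁻¹ :=
    inv_eq_right_inv (by simp [diagonal_mul_diagonal, hμ])
  rw [hSinv, dotProduct_mul_mul_transpose_mulVec, hDinv]
  simp only [dotProduct, mulVec_diagonal, Pi.inv_apply]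
  exact sum_congr rfl fun i _ => by ring

theorem pos_of_transpose_mul_mul_eq_diagonal (hS : S.PosDef) (hB : IsUnit B)
    (hBSB : Bᵀ * S * B = diagonal μ) (i : n) : 0 < μ i := by
  have h := hS.conjTranspose_mul_mul_same (mulVec_injective_of_isUnit hB)
  rw [conjTranspose_eq_transpose_of_trivial, hBSB] at h
  simpa using h.diag_pos (i := i)

variable {Sig Sigh V : Matrix n n ℝ}

theorem mul_mul_transpose_eq (hSighT : Sighᵀ = Sigh) (hV : V * Vᵀ = 1)
    (hSighsq : Sigh * Sigh = Sig) :
    Sig = Sigh * V * (Sigh * V)ᵀ := by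
  rw [transpose_mul, hSighT, ← hSighsq, Matrix.mul_assoc, ← Matrix.mul_assoc V, hV,
    Matrix.one_mul]

theorem transpose_mul_inv_mul_eq_one (hSighT : Sighᵀ = Sigh) (hV : V * Vᵀ = 1)
    (hSigh : IsUnit Sigh) :
    (Sigh * V)ᵀ * (Sigh⁻¹ * V) = 1 := by
  rw [transpose_mul, hSighT, Matrix.mul_assoc, ← Matrix.mul_assoc Sigh,
    mul_nonsing_inv _ ((isUnit_iff_isUnit_det _).mp hSigh), Matrix.one_mul,
    mul_eq_one_comm.mp hV]

theorem transpose_mul_mul_eq_diagonal (hSighT : Sighᵀ = Sigh) (hV : V * Vᵀ = 1)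
    (hdiag : Sigh * S * Sigh = V * diagonal μ * Vᵀ) :
    (Sigh * V)ᵀ * S * (Sigh * V) = diagonal μ := calc
  (Sigh * V)ᵀ * S * (Sigh * V) = Vᵀ * (Sigh * S * Sigh) * V := by
    simp only [transpose_mul, hSighT, Matrix.mul_assoc]
  _ = (Vᵀ * V) * diagonal μ * (Vᵀ * V) := by simp only [hdiag, Matrix.mul_assoc]
  _ = diagonal μ := by rw [mul_eq_one_comm.mp hV, Matrix.one_mul, Matrix.mul_one]

end Congruence

noncomputable def waterLevel (lam : ℕ → ℝ) (r ℓ : ℕ) : ℝ :=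
  ((ℓ : ℝ) - r) / ∑ i ∈ range ℓ, 1 / lam i

section WaterLevel

variable {d r ℓ : ℕ} {lam : ℕ → ℝ}

theorem sum_range_one_div_pos (hpos : ∀ i < ℓ, 0 < lam i) (hℓ : 0 < ℓ) :
    0 < ∑ i ∈ range ℓ, 1 / lam i :=
  sum_pos (fun i hi => one_div_pos.2 (hpos i (mem_range.1 hi))) ⟨0, mem_range.2 hℓ⟩

theorem waterLevel_pos (hpos : ∀ i < ℓ, 0 < lam i) (hr : r < ℓ) : 0 < waterLevel lam r ℓ :=
  div_pos (by rw [sub_pos]; exact_mod_cast hr) (sum_range_one_div_pos hpos (by omega))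

theorem waterLevel_mul_sum (hpos : ∀ i < ℓ, 0 < lam i) (hr : r < ℓ) :
    waterLevel lam r ℓ * ∑ i ∈ range ℓ, 1 / lam i = ℓ - r :=
  div_mul_cancel₀ _ (sum_range_one_div_pos hpos (by omega)).ne'

theorem waterLevel_le (hpos : ∀ i < d, 0 < lam i)
    (hmono : ∀ i j : ℕ, i ≤ j → j < d → lam j ≤ lam i) (hr : r < ℓ) (hℓ : ℓ ≤ d)
    (h : ((ℓ : ℝ) - r) / lam (ℓ - 1) ≤ ∑ i ∈ range ℓ, 1 / lam i) {i : ℕ} (hi : i < ℓ) :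
    waterLevel lam r ℓ ≤ lam i := by
  have hsum := sum_range_one_div_pos (fun i hi => hpos i (by omega)) (Nat.zero_lt_of_lt hr)
  calc waterLevel lam r ℓ ≤ lam (ℓ - 1) := by
        rw [waterLevel, div_le_iff₀ hsum, mul_comm]
        exact (div_le_iff₀ (hpos _ (by omega))).1 h
    _ ≤ lam i := hmono i (ℓ - 1) (by omega) (by omega)

theorem le_waterLevel (hpos : ∀ i < d, 0 < lam i)
    (hmono : ∀ i j : ℕ, i ≤ j → j < d → lam j ≤ lam i) (hr : r < ℓ)
    (h : ℓ = d ∨ ∑ i ∈ range ℓ, 1 / lam i ≤ ((ℓ : ℝ) - r) / lam ℓ) {i : ℕ} (hℓi : ℓ ≤ i)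
    (hi : i < d) : lam i ≤ waterLevel lam r ℓ := by
  have hsum := sum_range_one_div_pos (fun i hi => hpos i (by omega)) (Nat.zero_lt_of_lt hr)
  obtain h | h := h
  · omega
  calc lam i ≤ lam ℓ := hmono ℓ i hℓi hi
    _ ≤ waterLevel lam r ℓ := by
        rw [waterLevel, le_div_iff₀ hsum, mul_comm]
        exact (le_div_iff₀ (hpos ℓ (by omega))).1 h

end WaterLevel

theorem max_zero_one_sub_div_eq_zero {T μ : ℝ} (hμ : 0 < μ) (h : μ ≤ T) :
    max 0 (1 - T / μ) = 0 :=
  max_eq_left (by rw [sub_nonpos, one_le_div hμ]; exact h)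

theorem max_zero_one_sub_div_mem_hypersimplex {d r ℓ : ℕ} {lam : ℕ → ℝ} {T : ℝ} (hℓ : ℓ ≤ d)
    (hpos : ∀ i < d, 0 < lam i) (hT : 0 < T) (hle : ∀ i < ℓ, T ≤ lam i)
    (hge : ∀ i, ℓ ≤ i → i < d → lam i ≤ T) (hsum : T * ∑ i ∈ range ℓ, 1 / lam i = ℓ - r) :
    (fun i : Fin d => max 0 (1 - T / lam i)) ∈ hypersimplex (Fin d) r := by
  refine ⟨fun i => ⟨le_max_left _ _, max_le zero_le_one ?_⟩, ?_⟩
  · linarith [div_nonneg hT.le (hpos i i.2).le]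
  have hhigh : ∀ i ∈ Ico ℓ d, max 0 (1 - T / lam i) = 0 := fun i hi => by
    obtain ⟨hℓi, hid⟩ := mem_Ico.1 hi
    exact max_zero_one_sub_div_eq_zero (hpos i hid) (hge i hℓi hid)
  have hlow : ∀ i ∈ range ℓ, max 0 (1 - T / lam i) = 1 - T * (1 / lam i) := fun i hi => by
    have hi := mem_range.1 hi
    rw [mul_one_div]
    exact max_eq_right (sub_nonneg.2 ((div_le_one (hpos i (by omega))).2 (hle i hi)))
  rw [Fin.sum_univ_eq_sum_range (fun i => max 0 (1 - T / lam i)), ← sum_range_add_sum_Ico _ hℓ,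
    sum_eq_zero hhigh, add_zero, sum_congr rfl hlow, sum_sub_distrib, ← mul_sum, hsum]
  simp

theorem exists_weighted_subsets_of_waterLevel {d r ℓ : ℕ} {lam : ℕ → ℝ}
    (hpos : ∀ i < d, 0 < lam i) (hmono : ∀ i j : ℕ, i ≤ j → j < d → lam j ≤ lam i)
    (hr : r < ℓ) (hℓ : ℓ ≤ d) (h1 : ((ℓ : ℝ) - r) / lam (ℓ - 1) ≤ ∑ i ∈ range ℓ, 1 / lam i)
    (h2 : ℓ = d ∨ ∑ i ∈ range ℓ, 1 / lam i ≤ ((ℓ : ℝ) - r) / lam ℓ) :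
    ∃ m ≤ ℓ + 1, ∃ (I : Fin m → Finset (Fin d)) (p : Fin m → ℝ),
      (∀ j, #(I j) = r) ∧ (∀ j, ∀ i ∈ I j, (i : ℕ) < ℓ) ∧ (∀ j, 0 ≤ p j) ∧ ∑ j, p j = 1 ∧
      ∀ i : Fin d,
        1 - (∑ j, p j • (I j : Set (Fin d)).indicator 1) i ≤ waterLevel lam r ℓ / lam i := by
  have hT := waterLevel_pos (fun i hi => hpos i (by omega)) hr
  have hge : ∀ i, ℓ ≤ i → i < d → lam i ≤ waterLevel lam r ℓ :=
    fun i => le_waterLevel hpos hmono hr h2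
  obtain ⟨m, hm, I, p, hI, hIs, hp, hp1, hpq⟩ :=
    exists_sum_smul_indicator_eq_of_mem_hypersimplex_of_support
      (max_zero_one_sub_div_mem_hypersimplex hℓ hpos hT
        (fun i => waterLevel_le hpos hmono hr hℓ h1) hge
        (waterLevel_mul_sum (fun i hi => hpos i (by omega)) hr))
      {i : Fin d | i < ℓ} fun i hi =>
        max_zero_one_sub_div_eq_zero (hpos i i.2) (hge i (by simpa using hi) i.2)
  refine ⟨m, by simpa [Fin.card_filter_val_lt, hℓ] using hm, I, p, hI,
    fun j i hi => by simpa using hIs j hi, hp, hp1, fun i => ?_⟩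
  rw [hpq]
  linarith [le_max_right 0 (1 - waterLevel lam r ℓ / lam i)]

theorem stmt12_general (d r : ℕ)
    (Sig S : Matrix (Fin d) (Fin d) ℝ) (hS : S.PosDef)
    (Sigh : Matrix (Fin d) (Fin d) ℝ) (hSigh : Sigh.PosDef) (hSighsq : Sigh * Sigh = Sig)
    (lam : ℕ → ℝ) (hmono : ∀ i j : ℕ, i ≤ j → j < d → lam j ≤ lam i)
    (V : Matrix (Fin d) (Fin d) ℝ) (hV : V * Vᵀ = 1)
    (hdiag : Sigh * S * Sigh = V * Matrix.diagonal (fun i : Fin d => lam i.val) * Vᵀ)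
    (lstar : ℕ) (hl1 : r < lstar) (hl2 : lstar ≤ d)
    (hcond1 : ((lstar : ℝ) - r) / lam (lstar - 1) ≤ ∑ i ∈ Finset.range lstar, 1 / lam i)
    (hcond2 : lstar = d ∨
      ∑ i ∈ Finset.range lstar, 1 / lam i ≤ ((lstar : ℝ) - r) / lam lstar) :
    ∃ (m : ℕ), m ≤ lstar + 1 ∧
    ∃ (e : Fin m → Fin r → Fin d) (p : Fin m → ℝ),
      (∀ j, Function.Injective (e j)) ∧
      (∀ j i, (e j i).val < lstar) ∧
      (∀ j, 0 ≤ p j) ∧ (∑ j, p j = 1) ∧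
      (let R : Fin m → Matrix (Fin d) (Fin r) ℝ :=
        fun j => (Sigh⁻¹ * V).submatrix id (e j)
       (∀ j, IsUnit ((R j)ᵀ * Sig * R j).det) ∧
       ∀ f : Fin d → ℝ, f ⬝ᵥ (S⁻¹ *ᵥ f) ≤ 1 →
        ∑ j, p j *
            (f ⬝ᵥ ((Sig - Sig * R j * ((R j)ᵀ * Sig * R j)⁻¹ * (R j)ᵀ * Sig) *ᵥ f))
          ≤ ((lstar : ℝ) - r) / ∑ i ∈ Finset.range lstar, 1 / lam i) := by
  have hSighT : Sighᵀ = Sigh := (isHermitian_iff_isSymm.mp hSigh.isHermitian).eq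
  have hB : IsUnit (Sigh * V) := hSigh.isUnit.mul (IsUnit.of_mul_eq_one Vᵀ hV)
  have hSig := mul_mul_transpose_eq hSighT hV hSighsq
  have hBW := transpose_mul_inv_mul_eq_one hSighT hV hSigh.isUnit
  have hBSB := transpose_mul_mul_eq_diagonal hSighT hV hdiag
  have hlam : ∀ i < d, 0 < lam i := fun i hi =>
    pos_of_transpose_mul_mul_eq_diagonal hS hB hBSB ⟨i, hi⟩
  obtain ⟨m, hm, I, p, hI, hIℓ, hp, hp1, hq⟩ :=
    exists_weighted_subsets_of_waterLevel hlam hmono hl1 hl2 hcond1 hcond2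
  have he : ∀ j, Function.Injective ((I j).orderEmbOfFin (hI j)) := fun j =>
    ((I j).orderEmbOfFin (hI j)).injective
  refine ⟨m, hm, fun j => (I j).orderEmbOfFin (hI j), p, he,
    fun j i => hIℓ j _ (orderEmbOfFin_mem _ _ i), hp, hp1,
    fun j => by rw [transpose_mul_mul_submatrix_eq_one hSig hBW (he j), det_one]; exact isUnit_one,
    fun f hf => ?_⟩
  have hregret := fun j => dotProduct_regret_mulVec hSig hBW (he j) f
  simp only [image_orderEmbOfFin_univ] at hregret
  simp only [hregret]
  calc ∑ j, p j * ∑ i ∈ (I j)ᶜ, ((Sigh * V)ᵀ *ᵥ f) i ^ 2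
      ≤ ∑ i : Fin d, waterLevel lam r lstar * (lam i)⁻¹ * ((Sigh * V)ᵀ *ᵥ f) i ^ 2 :=
        sum_mul_sum_compl_le I hp1 (fun i => sq_nonneg _) fun i => by
          simpa only [div_eq_mul_inv] using hq i
    _ = waterLevel lam r lstar * f ⬝ᵥ (S⁻¹ *ᵥ f) := by
        rw [dotProduct_inv_mulVec_of_transpose_mul_mul_eq_diagonal hB hBSB
          (fun i => (hlam i i.2).ne') f, mul_sum]
        simp only [mul_assoc]
    _ ≤ waterLevel lam r lstar :=
        mul_le_of_le_one_right (waterLevel_pos (fun i hi => hlam i (by omega)) hl1).le hf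

/-- Suppose `ℓ* ∈ {r+1,…,d}` satisfies
`(ℓ*−r)/λ_{ℓ*} ≤ Σ_{i=1}^{ℓ*} 1/λ_i` and (`ℓ* = d` or
`Σ_{i=1}^{ℓ*} 1/λ_i ≤ (ℓ*−r)/λ_{ℓ*+1}`), where `lam : ℕ → ℝ` lists the eigenvalues of
`Σ^{1/2} S Σ^{1/2}` in nonincreasing order (0-based, `λ_i = lam (i−1)`) with orthonormal
eigenbasis the columns of the orthogonal matrix `V`. Then there are `m ≤ ℓ* + 1` size-`r`
subsets of `{1,…,ℓ*}` (encoded by injective maps `e j : Fin r → Fin d` with values `< ℓ*`)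
and weights `p_j ≥ 0` summing to `1` such that the representations `R_j` with columns
`Σ^{-1/2} v_i`, `i ∈ I_j`, have `R_jᵀ Σ R_j` invertible and for every `f` with
`fᵀ S⁻¹ f ≤ 1`, `Σ_j p_j · regret(R_j, f) ≤ (ℓ*−r)/Σ_{i=1}^{ℓ*} 1/λ_i`. -/
theorem stmt12 (d r : ℕ) (hr : 0 < r) (hrd : r < d)
    (Sig S : Matrix (Fin d) (Fin d) ℝ) (hSig : Sig.PosDef) (hS : S.PosDef)
    (Sigh : Matrix (Fin d) (Fin d) ℝ) (hSigh : Sigh.PosDef) (hSighsq : Sigh * Sigh = Sig)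
    (lam : ℕ → ℝ) (hmono : ∀ i j : ℕ, i ≤ j → j < d → lam j ≤ lam i)
    (V : Matrix (Fin d) (Fin d) ℝ) (hV : V * Vᵀ = 1)
    (hdiag : Sigh * S * Sigh = V * Matrix.diagonal (fun i : Fin d => lam i.val) * Vᵀ)
    (lstar : ℕ) (hl1 : r < lstar) (hl2 : lstar ≤ d)
    (hcond1 : ((lstar : ℝ) - r) / lam (lstar - 1) ≤ ∑ i ∈ Finset.range lstar, 1 / lam i)
    (hcond2 : lstar = d ∨
      ∑ i ∈ Finset.range lstar, 1 / lam i ≤ ((lstar : ℝ) - r) / lam lstar) :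
    ∃ (m : ℕ), m ≤ lstar + 1 ∧
    ∃ (e : Fin m → Fin r → Fin d) (p : Fin m → ℝ),
      (∀ j, Function.Injective (e j)) ∧
      (∀ j i, (e j i).val < lstar) ∧
      (∀ j, 0 ≤ p j) ∧ (∑ j, p j = 1) ∧
      (let R : Fin m → Matrix (Fin d) (Fin r) ℝ :=
        fun j => (Sigh⁻¹ * V).submatrix id (e j)
       (∀ j, IsUnit ((R j)ᵀ * Sig * R j).det) ∧
       ∀ f : Fin d → ℝ, f ⬝ᵥ (S⁻¹ *ᵥ f) ≤ 1 →
        ∑ j, p j *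
            (f ⬝ᵥ ((Sig - Sig * R j * ((R j)ᵀ * Sig * R j)⁻¹ * (R j)ᵀ * Sig) *ᵥ f))
          ≤ ((lstar : ℝ) - r) / ∑ i ∈ Finset.range lstar, 1 / lam i) :=
  stmt12_general d r Sig S hS Sigh hSigh hSighsq lam hmono V hV hdiag lstar hl1 hl2 hcond1 hcond2
end

section
/- Suppose ℓ* ∈ {r+1, …, d} satisfies (ℓ* − r)/λ_{ℓ*} ≤ Σ_{i=1}^{ℓ*}(1/λ_i) and (ℓ* = d or Σ_{i=1}^{ℓ*}(1/λ_i) ≤ (ℓ* − r)/λ_{ℓ*+1}), where λ_i = λ_i(S^{1/2} Σ S^{1/2}). Let W be an orthogonal matrix whose columns are eigenvectors of S^{1/2} Σ S^{1/2} ordered by nonincreasing eigenvalue, and define the least favorable second-moment matrix M* = (Σ_{i=1}^{ℓ*} 1/λ_i)⁻¹ · W diag(1/λ_1, …, 1/λ_{ℓ*}, 0, …, 0) Wᵀ. Then Tr[M*] = 1, and for every R ∈ ℝ^{d×r} with Rᵀ Σ R invertible, Tr[(S^{1/2} Σ S^{1/2} − S^{1/2} Σ R (Rᵀ Σ R)⁻¹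 Rᵀ Σ S^{1/2}) M*] ≥ (ℓ* − r)/Σ_{i=1}^{ℓ*}(1/λ_i). -/
/-!
Write `A = S^{1/2} Σ S^{1/2} = W Λ Wᵀ` and `N = W diag(1/λ_1, …, 1/λ_ℓ, 0, …, 0) Wᵀ`, so that
`M* = N / tr N` and `tr (A N) = ℓ`. With `U = S^{-1/2} R` the matrix in the trace is
`A - A U (Uᵀ A U)⁻¹ Uᵀ A`, and the subtracted term contributes
`tr ((Uᵀ A U)⁻¹ Uᵀ A N A U) ≤ tr ((Uᵀ A U)⁻¹ Uᵀ A U) = r`,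
because `A N A = W diag(λ_1, …, λ_ℓ, 0, …, 0) Wᵀ ≤ A` in the Loewner order.
-/

open Matrix
open scoped MatrixOrder ComplexOrder

theorem Fin.sum_univ_ite_val_lt {M : Type*} [AddCommMonoid M] {d l : ℕ} (h : l ≤ d)
    (f : ℕ → M) : ∑ i : Fin d, (if i.val < l then f i else 0) = ∑ i ∈ Finset.range l, f i := by
  rw [Fin.sum_univ_eq_sum_range (fun i => if i < l then f i else 0), ← Finset.sum_filter]
  congr 1
  ext i
  simp only [Finset.mem_filter, Finset.mem_range]
  omega

section TruncatedInverse

variable {d l : ℕ} {lam : ℕ → ℝ}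

theorem sum_range_one_div_pos_s13 (hl : 0 < l) (hld : l ≤ d) (hlam : ∀ i : Fin d, 0 < lam i) :
    0 < ∑ i ∈ Finset.range l, 1 / lam i :=
  Finset.sum_pos (fun i hi => one_div_pos.mpr (hlam ⟨i, (Finset.mem_range.mp hi).trans_le hld⟩))
    (Finset.nonempty_range_iff.mpr hl.ne')

theorem mul_ite_val_lt_one_div (hlam : ∀ i : Fin d, lam i ≠ 0) (i : Fin d) :
    lam i * (if i.val < l then 1 / lam i else 0) = if i.val < l then 1 else 0 := by
  split_ifs
  exacts [mul_one_div_cancel (hlam i), mul_zero _]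

end TruncatedInverse

namespace Matrix

variable {n m : Type*} [Fintype n]

theorem PosSemidef.trace_mul_nonneg {𝕜 : Type*} [RCLike 𝕜] {A B : Matrix n n 𝕜}
    (hA : A.PosSemidef) (hB : B.PosSemidef) : 0 ≤ (A * B).trace := by
  classical
  obtain ⟨C, rfl⟩ := CStarAlgebra.nonneg_iff_eq_star_mul_self.mp hA.nonneg
  rw [star_eq_conjTranspose, Matrix.mul_assoc, trace_mul_comm]
  exact (hB.mul_mul_conjTranspose_same C).trace_nonneg

theorem PosDef.trace_inv_mul_le_card [Fintype m] [DecidableEq m] {K L : Matrix m m ℝ}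
    (hK : K.PosDef) (hKL : (K - L).PosSemidef) : (K⁻¹ * L).trace ≤ Fintype.card m := by
  have hsplit : K⁻¹ * L = 1 - K⁻¹ * (K - L) := by
    rw [Matrix.mul_sub, nonsing_inv_mul K ((isUnit_iff_isUnit_det K).mp hK.isUnit)]
    abel
  have := hK.inv.posSemidef.trace_mul_nonneg hKL
  rw [hsplit, trace_sub, trace_one]
  linarith

theorem sub_card_le_trace_residual_mul [Fintype m] [DecidableEq m] {A N : Matrix n n ℝ}
    {U : Matrix n m ℝ} (hA : A.PosSemidef) (hU : IsUnit (Uᵀ * A * U).det)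
    (hN : (A - A * N * A).PosSemidef) :
    (A * N).trace - Fintype.card m ≤ ((A - A * U * (Uᵀ * A * U)⁻¹ * Uᵀ * A) * N).trace := by
  have hK : (Uᵀ * A * U).PosDef := by
    refine (PosSemidef.posDef_iff_isUnit ?_).mpr ((isUnit_iff_isUnit_det _).mpr hU)
    simpa using hA.conjTranspose_mul_mul_same U
  have hle := hK.trace_inv_mul_le_card (L := Uᵀ * (A * N * A) * U) (by
    rw [← Matrix.sub_mul, ← Matrix.mul_sub]
    simpa using hN.conjTranspose_mul_mul_same U)
  have hcycle : (A * U * (Uᵀ * A * U)⁻¹ * Uᵀ * A * N).trace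
      = ((Uᵀ * A * U)⁻¹ * (Uᵀ * (A * N * A) * U)).trace := by
    rw [show A * U * (Uᵀ * A * U)⁻¹ * Uᵀ * A * N = (A * U) * ((Uᵀ * A * U)⁻¹ * Uᵀ * A * N) by
      simp only [Matrix.mul_assoc], trace_mul_comm]
    simp only [Matrix.mul_assoc]
  rw [Matrix.sub_mul, trace_sub, hcycle]
  linarith

section Congruence

variable [DecidableEq n] {S : Matrix n n ℝ} (Sig : Matrix n n ℝ) (R : Matrix n m ℝ)

theorem conj_mul_inv_mul (hSdet : IsUnit S.det) : S * Sig * S * (S⁻¹ * R) = S * Sig * R := by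
  rw [Matrix.mul_assoc, ← Matrix.mul_assoc S, mul_nonsing_inv S hSdet, Matrix.one_mul]

theorem transpose_inv_mul_mul_conj (hS : Sᵀ = S) (hSdet : IsUnit S.det) :
    (S⁻¹ * R)ᵀ * (S * Sig * S) = Rᵀ * Sig * S := by
  rw [transpose_mul, transpose_nonsing_inv, hS, Matrix.mul_assoc, ← Matrix.mul_assoc S⁻¹,
    ← Matrix.mul_assoc S⁻¹, nonsing_inv_mul S hSdet, Matrix.one_mul, Matrix.mul_assoc]

theorem transpose_inv_mul_mul_conj_mul (hS : Sᵀ = S) (hSdet : IsUnit S.det) :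
    (S⁻¹ * R)ᵀ * (S * Sig * S) * (S⁻¹ * R) = Rᵀ * Sig * R := by
  rw [transpose_inv_mul_mul_conj Sig R hS hSdet, Matrix.mul_assoc, ← Matrix.mul_assoc S,
    mul_nonsing_inv S hSdet, Matrix.one_mul]

theorem residual_conj_eq [Fintype m] [DecidableEq m] (hS : Sᵀ = S) (hSdet : IsUnit S.det) :
    S * Sig * R * (Rᵀ * Sig * R)⁻¹ * Rᵀ * Sig * S =
      S * Sig * S * (S⁻¹ * R) * ((S⁻¹ * R)ᵀ * (S * Sig * S) * (S⁻¹ * R))⁻¹ *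
        (S⁻¹ * R)ᵀ * (S * Sig * S) := by
  rw [conj_mul_inv_mul Sig R hSdet, transpose_inv_mul_mul_conj_mul Sig R hS hSdet,
    Matrix.mul_assoc _ (S⁻¹ * R)ᵀ, transpose_inv_mul_mul_conj Sig R hS hSdet]
  simp only [Matrix.mul_assoc]

end Congruence

section Orthogonal

variable [DecidableEq n] {W : Matrix n n ℝ}

theorem conj_mul_conj_of_mul_transpose_eq_one (hW : W * Wᵀ = 1) (X Y : Matrix n n ℝ) :
    W * X * Wᵀ * (W * Y * Wᵀ) = W * (X * Y) * Wᵀ := by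
  simp only [Matrix.mul_assoc]
  rw [← Matrix.mul_assoc Wᵀ W, mul_eq_one_comm.mp hW, Matrix.one_mul]

theorem trace_conj_of_mul_transpose_eq_one (hW : W * Wᵀ = 1) (X : Matrix n n ℝ) :
    (W * X * Wᵀ).trace = X.trace := by
  rw [trace_mul_cycle, mul_eq_one_comm.mp hW, Matrix.one_mul]

theorem trace_conj_diagonal_mul_conj_diagonal (hW : W * Wᵀ = 1) (f g : n → ℝ) :
    (W * diagonal f * Wᵀ * (W * diagonal g * Wᵀ)).trace = ∑ i, f i * g i := by
  rw [conj_mul_conj_of_mul_transpose_eq_one hW, trace_conj_of_mul_transpose_eq_one hW,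
    diagonal_mul_diagonal, trace_diagonal]

theorem posSemidef_conj_diagonal_sub_mul_mul (hW : W * Wᵀ = 1) {f g : n → ℝ}
    (hfg : ∀ i, f i * g i * f i ≤ f i) :
    (W * diagonal f * Wᵀ -
      W * diagonal f * Wᵀ * (W * diagonal g * Wᵀ) * (W * diagonal f * Wᵀ)).PosSemidef := by
  rw [conj_mul_conj_of_mul_transpose_eq_one hW, conj_mul_conj_of_mul_transpose_eq_one hW,
    diagonal_mul_diagonal, diagonal_mul_diagonal, ← Matrix.sub_mul, ← Matrix.mul_sub,
    diagonal_sub]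
  have hdiag : (diagonal fun i => f i - f i * g i * f i).PosSemidef :=
    posSemidef_diagonal_iff.mpr fun i => sub_nonneg.mpr (hfg i)
  simpa using hdiag.mul_mul_conjTranspose_same W

theorem pos_of_posDef_conj_diagonal (hW : W * Wᵀ = 1) {f : n → ℝ}
    (h : (W * diagonal f * Wᵀ).PosDef) (i : n) : 0 < f i := by
  have hWunit : IsUnit W := (isUnit_iff_isUnit_det W).mpr (isUnit_det_of_right_inverse hW)
  rw [← conjTranspose_eq_transpose_of_trivial, ← star_eq_conjTranspose] at h
  exact posDef_diagonal_iff.mp ((IsUnit.posDef_star_right_conjugate_iff hWunit).mp h) i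

end Orthogonal

end Matrix

theorem stmt13_general (d r : ℕ)
    (Sig : Matrix (Fin d) (Fin d) ℝ) (hSig : Sig.PosDef)
    (Sh : Matrix (Fin d) (Fin d) ℝ) (hSh : Sh.PosDef)
    (lam : ℕ → ℝ)
    (W : Matrix (Fin d) (Fin d) ℝ) (hW : W * Wᵀ = 1)
    (hdiag : Sh * Sig * Sh = W * Matrix.diagonal (fun i : Fin d => lam i.val) * Wᵀ)
    (lstar : ℕ) (hl1 : r < lstar) (hl2 : lstar ≤ d) :
    let Mstar : Matrix (Fin d) (Fin d) ℝ :=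
      (∑ i ∈ Finset.range lstar, 1 / lam i)⁻¹ •
        (W * Matrix.diagonal (fun i : Fin d => if i.val < lstar then 1 / lam i.val else 0)
          * Wᵀ)
    Mstar.trace = 1 ∧
    ∀ R : Matrix (Fin d) (Fin r) ℝ, IsUnit (Rᵀ * Sig * R).det →
      ((lstar : ℝ) - r) / ∑ i ∈ Finset.range lstar, 1 / lam i ≤
        Matrix.trace
          ((Sh * Sig * Sh - Sh * Sig * R * (Rᵀ * Sig * R)⁻¹ * Rᵀ * Sig * Sh) * Mstar) := by
  intro Mstar
  set c := ∑ i ∈ Finset.range lstar, 1 / lam i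
  set μ : Fin d → ℝ := fun i => if i.val < lstar then 1 / lam i.val else 0
  have hShT : Shᵀ = Sh := by simpa using hSh.isHermitian.eq
  have hShdet : IsUnit Sh.det := (isUnit_iff_isUnit_det Sh).mp hSh.isUnit
  have hA : (Sh * Sig * Sh).PosDef := by
    simpa [hShT] using hSig.conjTranspose_mul_mul_same (mulVec_injective_of_isUnit hSh.isUnit)
  have hlam (i : Fin d) : 0 < lam i := pos_of_posDef_conj_diagonal hW (hdiag ▸ hA) i
  have hc : 0 < c := sum_range_one_div_pos_s13 (Nat.zero_lt_of_lt hl1) hl2 hlam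
  have hlamμ := mul_ite_val_lt_one_div (l := lstar) fun i => (hlam i).ne'
  have htrN : (W * diagonal μ * Wᵀ).trace = c := by
    rw [trace_conj_of_mul_transpose_eq_one hW, trace_diagonal]
    exact Fin.sum_univ_ite_val_lt hl2 fun i => 1 / lam i
  have htrAN : (Sh * Sig * Sh * (W * diagonal μ * Wᵀ)).trace = lstar := by
    rw [hdiag, trace_conj_diagonal_mul_conj_diagonal hW, Finset.sum_congr rfl fun i _ => hlamμ i,
      Fin.sum_univ_ite_val_lt hl2 fun _ => (1 : ℝ)]
    simp
  have hANA := posSemidef_conj_diagonal_sub_mul_mul hW (f := fun i : Fin d => lam i) (g := μ)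
    fun i => by rw [hlamμ]; split_ifs <;> linarith [hlam i]
  rw [← hdiag] at hANA
  refine ⟨by rw [trace_smul, htrN, smul_eq_mul, inv_mul_cancel₀ hc.ne'], fun R hR => ?_⟩
  have hres := sub_card_le_trace_residual_mul hA.posSemidef
    ((transpose_inv_mul_mul_conj_mul Sig R hShT hShdet).symm ▸ hR) hANA
  rw [htrAN, Fintype.card_fin] at hres
  rw [residual_conj_eq Sig R hShT hShdet, Matrix.mul_smul, trace_smul, smul_eq_mul,
    div_eq_inv_mul]
  exact mul_le_mul_of_nonneg_left hres (inv_nonneg.mpr hc.le)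

/-- Suppose `ℓ* ∈ {r+1,…,d}` satisfies
`(ℓ*−r)/λ_{ℓ*} ≤ Σ_{i=1}^{ℓ*} 1/λ_i` and (`ℓ* = d` or
`Σ_{i=1}^{ℓ*} 1/λ_i ≤ (ℓ*−r)/λ_{ℓ*+1}`), where `lam : ℕ → ℝ` lists the eigenvalues of
`S^{1/2} Σ S^{1/2}` in nonincreasing order (0-based, `λ_i = lam (i−1)`) with eigenvectors
the columns of the orthogonal matrix `W`, and `Sh = S^{1/2}`. With the least favorable
second-moment matrix `M* = (Σ_{i=1}^{ℓ*} 1/λ_i)⁻¹ · W diag(1/λ_1,…,1/λ_{ℓ*},0,…,0) Wᵀ`,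
one has `Tr[M*] = 1`, and for every `R` with `Rᵀ Σ R` invertible,
`Tr[(S^{1/2} Σ S^{1/2} − S^{1/2} Σ R (Rᵀ Σ R)⁻¹ Rᵀ Σ S^{1/2}) M*]
  ≥ (ℓ*−r)/Σ_{i=1}^{ℓ*} 1/λ_i`. -/
theorem stmt13 (d r : ℕ) (hr : 0 < r) (hrd : r < d)
    (Sig S : Matrix (Fin d) (Fin d) ℝ) (hSig : Sig.PosDef) (hS : S.PosDef)
    (Sh : Matrix (Fin d) (Fin d) ℝ) (hSh : Sh.PosDef) (hShsq : Sh * Sh = S)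
    (lam : ℕ → ℝ) (hmono : ∀ i j : ℕ, i ≤ j → j < d → lam j ≤ lam i)
    (W : Matrix (Fin d) (Fin d) ℝ) (hW : W * Wᵀ = 1)
    (hdiag : Sh * Sig * Sh = W * Matrix.diagonal (fun i : Fin d => lam i.val) * Wᵀ)
    (lstar : ℕ) (hl1 : r < lstar) (hl2 : lstar ≤ d)
    (hcond1 : ((lstar : ℝ) - r) / lam (lstar - 1) ≤ ∑ i ∈ Finset.range lstar, 1 / lam i)
    (hcond2 : lstar = d ∨
      ∑ i ∈ Finset.range lstar, 1 / lam i ≤ ((lstar : ℝ) - r) / lam lstar) :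
    let Mstar : Matrix (Fin d) (Fin d) ℝ :=
      (∑ i ∈ Finset.range lstar, 1 / lam i)⁻¹ •
        (W * Matrix.diagonal (fun i : Fin d => if i.val < lstar then 1 / lam i.val else 0)
          * Wᵀ)
    Mstar.trace = 1 ∧
    ∀ R : Matrix (Fin d) (Fin r) ℝ, IsUnit (Rᵀ * Sig * R).det →
      ((lstar : ℝ) - r) / ∑ i ∈ Finset.range lstar, 1 / lam i ≤
        Matrix.trace
          ((Sh * Sig * Sh - Sh * Sig * R * (Rᵀ * Sig * R)⁻¹ * Rᵀ * Sig * Sh) * Mstar) :=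
  stmt13_general d r Sig hSig Sh hSh lam W hW hdiag lstar hl1 hl2
end

section
/- Let reg denote the infimum over all subspaces W ⊆ H with dim W ≤ r of sup_{f ∈ F} inf_{w ∈ W} ‖f − w‖², and for an integer d > r let reg_d denote the infimum over all subspaces W ⊆ span{φ_1, …, φ_d} with dim W ≤ r of sup over {f ∈ F : ⟨f, φ_j⟩ = 0 for all j > d} of inf_{w ∈ W} ‖f − w‖². Then reg_d ≤ reg ≤ reg_d + λ_{d+1}; consequently reg = lim_{d→∞} reg_d. -/
/-!
The orthogonal projection `P` onto `span {φ_j : j < d}` links the two problems. If `dim W ≤ r`,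
then `P W` is admissible for the truncated problem, and since `P` is a contraction fixing every
truncated `f`, it approximates such `f` at least as well as `W` does; hence `reg_d ≤ reg`.
Conversely, if `W ⊆ span {φ_j : j < d}`, Pythagoras gives
`dist(f, W)² = dist(P f, W)² + ‖f - P f‖²`, where `P f` lies in the truncated ellipsoid and
`‖f - P f‖² = ∑_{j ≥ d} ⟨f, φ_j⟩² ≤ λ_d ∑_j ⟨f, φ_j⟩² / λ_j ≤ λ_d`; hence `reg ≤ reg_d + λ_d`.
The limit follows by squeezing, as `λ_d → 0`.
-/

open scoped RealInnerProductSpace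

section SqDist

variable {E : Type*} [SeminormedAddCommGroup E] [Module ℝ E]

noncomputable def infSqDist (W : Submodule ℝ E) (f : E) : ℝ :=
  sInf {t | ∃ w ∈ W, t = ‖f - w‖ ^ 2}

noncomputable def worstSqDist (S : Set E) (W : Submodule ℝ E) : ℝ :=
  sSup {u | ∃ f ∈ S, u = infSqDist W f}

noncomputable def minimaxSqDist (S : Set E) (C : Set (Submodule ℝ E)) : ℝ :=
  sInf {v | ∃ W ∈ C, v = worstSqDist S W}

variable {S S' : Set E} {C C' : Set (Submodule ℝ E)} {W : Submodule ℝ E} {f : E} {c : ℝ}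

lemma infSqDist_nonneg (W : Submodule ℝ E) (f : E) : 0 ≤ infSqDist W f :=
  Real.sInf_nonneg <| by rintro _ ⟨w, -, rfl⟩; positivity

lemma infSqDist_le {w : E} (hw : w ∈ W) : infSqDist W f ≤ ‖f - w‖ ^ 2 :=
  csInf_le ⟨0, by rintro _ ⟨w, -, rfl⟩; positivity⟩ ⟨w, hw, rfl⟩

lemma le_infSqDist (h : ∀ w ∈ W, c ≤ ‖f - w‖ ^ 2) : c ≤ infSqDist W f :=
  le_csInf ⟨_, 0, W.zero_mem, rfl⟩ <| by rintro _ ⟨w, hw, rfl⟩; exact h w hw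

lemma infSqDist_le_norm_sq (W : Submodule ℝ E) (f : E) : infSqDist W f ≤ ‖f‖ ^ 2 := by
  simpa using infSqDist_le (f := f) W.zero_mem

lemma infSqDist_map_le {P : E →ₗ[ℝ] E} (hP : ∀ x, ‖P x‖ ≤ ‖x‖) (hf : P f = f) :
    infSqDist (W.map P) f ≤ infSqDist W f :=
  le_infSqDist fun w hw => calc
    infSqDist (W.map P) f ≤ ‖f - P w‖ ^ 2 := infSqDist_le ⟨w, hw, rfl⟩
    _ = ‖P (f - w)‖ ^ 2 := by rw [map_sub, hf]
    _ ≤ ‖f - w‖ ^ 2 := by gcongr; exact hP _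

lemma worstSqDist_nonneg (S : Set E) (W : Submodule ℝ E) : 0 ≤ worstSqDist S W :=
  Real.sSup_nonneg <| by rintro _ ⟨f, -, rfl⟩; exact infSqDist_nonneg W f

lemma infSqDist_le_worstSqDist {M : ℝ} (hS : ∀ g ∈ S, ‖g‖ ^ 2 ≤ M) (hf : f ∈ S) :
    infSqDist W f ≤ worstSqDist S W :=
  le_csSup ⟨M, by rintro _ ⟨g, hg, rfl⟩; exact (infSqDist_le_norm_sq W g).trans (hS g hg)⟩
    ⟨f, hf, rfl⟩

lemma worstSqDist_le (hS : S.Nonempty) (h : ∀ f ∈ S, infSqDist W f ≤ c) :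
    worstSqDist S W ≤ c :=
  csSup_le ⟨_, hS.some, hS.some_mem, rfl⟩ <| by rintro _ ⟨f, hf, rfl⟩; exact h f hf

lemma minimaxSqDist_le (hW : W ∈ C) : minimaxSqDist S C ≤ worstSqDist S W :=
  csInf_le ⟨0, by rintro _ ⟨W, -, rfl⟩; exact worstSqDist_nonneg S W⟩ ⟨W, hW, rfl⟩

lemma minimaxSqDist_le_add {ε : ℝ} (hC : C.Nonempty)
    (h : ∀ W ∈ C, ∃ W' ∈ C', worstSqDist S' W' ≤ worstSqDist S W + ε) :
    minimaxSqDist S' C' ≤ minimaxSqDist S C + ε := by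
  rw [← sub_le_iff_le_add]
  refine le_csInf ⟨_, hC.some, hC.some_mem, rfl⟩ ?_
  rintro _ ⟨W, hW, rfl⟩
  obtain ⟨W', hW', hle⟩ := h W hW
  linarith [minimaxSqDist_le (S := S') hW']

end SqDist

lemma infSqDist_le_infSqDist_starProjection_add {H : Type*} [NormedAddCommGroup H]
    [InnerProductSpace ℝ H] (K : Submodule ℝ H) [K.HasOrthogonalProjection]
    {W : Submodule ℝ H} (hW : W ≤ K) (f : H) :
    infSqDist W f ≤ infSqDist W (K.starProjection f) + ‖f - K.starProjection f‖ ^ 2 := by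
  rw [← sub_le_iff_le_add]
  refine le_infSqDist fun w hw => ?_
  have hperp : ⟪K.starProjection f - w, f - K.starProjection f⟫ = 0 :=
    K.inner_right_of_mem_orthogonal (K.sub_mem (K.starProjection_apply_mem f) (hW hw))
      (K.sub_starProjection_mem_orthogonal f)
  have hsplit : f - w = (K.starProjection f - w) + (f - K.starProjection f) := by abel
  have := infSqDist_le (f := f) hw
  rw [hsplit, norm_add_sq_real, hperp] at this
  linarith

lemma sq_le_mul_sq_div_of_le {l c : ℝ} (hl : 0 < l) (hlc : l ≤ c) (x : ℝ) :
    x ^ 2 ≤ c * (x ^ 2 / l) :=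
  calc x ^ 2 = l * (x ^ 2 / l) := by field_simp
    _ ≤ c * (x ^ 2 / l) := by gcongr

instance FiniteDimensional.span_image_Iio {K V : Type*} [DivisionRing K] [AddCommGroup V]
    [Module K V] (v : ℕ → V) (d : ℕ) : FiniteDimensional K (Submodule.span K (v '' Set.Iio d)) :=
  FiniteDimensional.span_of_finite K ((Set.finite_Iio d).image v)

def ellipsoid {H ι : Type*} [NormedAddCommGroup H] [InnerProductSpace ℝ H] (phi : ι → H)
    (lam : ι → ℝ) : Set H :=
  {f | (Summable fun j => ⟪f, phi j⟫ ^ 2 / lam j) ∧ ∑' j, ⟪f, phi j⟫ ^ 2 / lam j ≤ 1}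

def truncatedEllipsoid {H : Type*} [NormedAddCommGroup H] [InnerProductSpace ℝ H]
    (phi : ℕ → H) (lam : ℕ → ℝ) (d : ℕ) : Set H :=
  ellipsoid phi lam ∩ {f | ∀ j, d ≤ j → ⟪f, phi j⟫ = 0}

lemma zero_mem_ellipsoid {H ι : Type*} [NormedAddCommGroup H] [InnerProductSpace ℝ H]
    (phi : ι → H) (lam : ι → ℝ) : 0 ∈ ellipsoid phi lam := by
  simp [ellipsoid]

namespace HilbertBasis

variable {H : Type*} [NormedAddCommGroup H] [InnerProductSpace ℝ H] (b : HilbertBasis ℕ ℝ H)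

lemma hasSum_inner_sq (x : H) : HasSum (fun j => ⟪x, b j⟫ ^ 2) (‖x‖ ^ 2) := by
  simpa only [real_inner_comm x, ← sq, real_inner_self_eq_norm_sq] using
    b.hasSum_inner_mul_inner x x

lemma inner_starProjection_span_Iio (d j : ℕ) (x : H) :
    ⟪(Submodule.span ℝ (b '' Set.Iio d)).starProjection x, b j⟫ =
      if j < d then ⟪x, b j⟫ else 0 := by
  rw [Submodule.inner_starProjection_left_eq_right]
  split_ifs with hj
  · rw [Submodule.starProjection_eq_self_iff.mpr
      (Submodule.subset_span (Set.mem_image_of_mem b (Set.mem_Iio.mpr hj)))]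
  · have hperp : (ℝ ∙ b j) ⟂ Submodule.span ℝ (b '' Set.Iio d) :=
      Submodule.isOrtho_span.mpr <| by
        rintro _ rfl _ ⟨i, hi, rfl⟩
        exact b.orthonormal.inner_eq_zero fun hij => hj (hij ▸ hi)
    rw [(Submodule.starProjection_apply_eq_zero_iff _).mpr
      (hperp (Submodule.mem_span_singleton_self _)), inner_zero_right]

lemma starProjection_span_Iio_eq_self {d : ℕ} {f : H} (hf : ∀ j, d ≤ j → ⟪f, b j⟫ = 0) :
    (Submodule.span ℝ (b '' Set.Iio d)).starProjection f = f := by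
  set P := (Submodule.span ℝ (b '' Set.Iio d)).starProjection
  have hcoeff : ∀ j, ⟪f - P f, b j⟫ = 0 := fun j => by
    rw [inner_sub_left, inner_starProjection_span_Iio]
    split_ifs with hj
    · exact sub_self _
    · rw [hf j (not_lt.mp hj), sub_zero]
  have hnorm : ‖f - P f‖ ^ 2 = 0 :=
    (b.hasSum_inner_sq _).unique (by simpa only [hcoeff, sq, mul_zero] using hasSum_zero)
  rw [pow_eq_zero_iff two_ne_zero, norm_eq_zero, sub_eq_zero] at hnorm
  exact hnorm.symm

variable {b} {lam : ℕ → ℝ}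

lemma norm_sq_le_of_inner_sq_le {f g : H} (hf : f ∈ ellipsoid b lam) {c : ℝ} (hc : 0 ≤ c)
    (h : ∀ j, ⟪g, b j⟫ ^ 2 ≤ c * (⟪f, b j⟫ ^ 2 / lam j)) : ‖g‖ ^ 2 ≤ c :=
  calc ‖g‖ ^ 2 = ∑' j, ⟪g, b j⟫ ^ 2 := (b.hasSum_inner_sq g).tsum_eq.symm
    _ ≤ ∑' j, c * (⟪f, b j⟫ ^ 2 / lam j) :=
      Summable.tsum_le_tsum h (b.hasSum_inner_sq g).summable (hf.1.mul_left c)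
    _ = c * ∑' j, ⟪f, b j⟫ ^ 2 / lam j := tsum_mul_left
    _ ≤ c := mul_le_of_le_one_right hc hf.2

variable (hpos : ∀ j, 0 < lam j)
include hpos

lemma starProjection_span_Iio_mem_ellipsoid (d : ℕ) {f : H} (hf : f ∈ ellipsoid b lam) :
    (Submodule.span ℝ (b '' Set.Iio d)).starProjection f ∈ ellipsoid b lam := by
  set P := (Submodule.span ℝ (b '' Set.Iio d)).starProjection
  have hnonneg : ∀ j, 0 ≤ ⟪P f, b j⟫ ^ 2 / lam j := fun j => div_nonneg (sq_nonneg _) (hpos j).le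
  have hle : ∀ j, ⟪P f, b j⟫ ^ 2 / lam j ≤ ⟪f, b j⟫ ^ 2 / lam j := fun j => by
    rw [inner_starProjection_span_Iio]
    split_ifs
    · exact le_rfl
    · simpa only [sq, mul_zero, zero_div] using div_nonneg (sq_nonneg _) (hpos j).le
  have hsum := hf.1.of_nonneg_of_le hnonneg hle
  exact ⟨hsum, (hsum.tsum_le_tsum hle hf.1).trans hf.2⟩

variable (hmono : Antitone lam)
include hmono

lemma norm_sq_le_of_mem_ellipsoid {f : H} (hf : f ∈ ellipsoid b lam) : ‖f‖ ^ 2 ≤ lam 0 :=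
  norm_sq_le_of_inner_sq_le hf (hpos 0).le fun j =>
    sq_le_mul_sq_div_of_le (hpos j) (hmono j.zero_le) _

lemma norm_sub_starProjection_span_Iio_sq_le (d : ℕ) {f : H} (hf : f ∈ ellipsoid b lam) :
    ‖f - (Submodule.span ℝ (b '' Set.Iio d)).starProjection f‖ ^ 2 ≤ lam d :=
  norm_sq_le_of_inner_sq_le hf (hpos d).le fun j => by
    rw [inner_sub_left, inner_starProjection_span_Iio]
    split_ifs with hj
    · rw [sub_self, sq, mul_zero]
      exact mul_nonneg (hpos d).le (div_nonneg (sq_nonneg _) (hpos j).le)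
    · rw [sub_zero]
      exact sq_le_mul_sq_div_of_le (hpos j) (hmono (not_lt.mp hj)) _

lemma minimaxSqDist_truncation_le (d : ℕ) (κ : Cardinal) :
    minimaxSqDist (truncatedEllipsoid b lam d)
        {W | W ≤ Submodule.span ℝ (b '' Set.Iio d) ∧ Module.rank ℝ W ≤ κ} ≤
      minimaxSqDist (ellipsoid b lam) {W | Module.rank ℝ W ≤ κ} := by
  set K := Submodule.span ℝ (b '' Set.Iio d)
  refine (minimaxSqDist_le_add (ε := 0) ⟨⊥, by simp⟩ fun W hW => ?_).trans_eq (add_zero _)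
  refine ⟨W.map (K.starProjection : H →ₗ[ℝ] H), ⟨?_, (rank_map_le _ _).trans hW⟩, ?_⟩
  · rintro _ ⟨w, -, rfl⟩
    exact K.starProjection_apply_mem w
  rw [add_zero]
  refine worstSqDist_le ⟨0, zero_mem_ellipsoid _ _, fun j _ => inner_zero_left _⟩ ?_
  rintro f ⟨hf, htail⟩
  exact (infSqDist_map_le K.norm_starProjection_apply_le
    (b.starProjection_span_Iio_eq_self htail)).trans
    (infSqDist_le_worstSqDist (fun g hg => norm_sq_le_of_mem_ellipsoid hpos hmono hg) hf)

lemma minimaxSqDist_le_truncation_add (d : ℕ) (κ : Cardinal) :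
    minimaxSqDist (ellipsoid b lam) {W | Module.rank ℝ W ≤ κ} ≤
      minimaxSqDist (truncatedEllipsoid b lam d)
        {W | W ≤ Submodule.span ℝ (b '' Set.Iio d) ∧ Module.rank ℝ W ≤ κ} + lam d := by
  set K := Submodule.span ℝ (b '' Set.Iio d)
  refine minimaxSqDist_le_add ⟨⊥, bot_le, by simp⟩ fun W hW =>
    ⟨W, hW.2, worstSqDist_le ⟨0, zero_mem_ellipsoid _ _⟩ fun f hf => ?_⟩
  have htail : ∀ j, d ≤ j → ⟪K.starProjection f, b j⟫ = 0 := fun j hj => by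
    rw [inner_starProjection_span_Iio, if_neg (not_lt.mpr hj)]
  calc infSqDist W f ≤ infSqDist W (K.starProjection f) + ‖f - K.starProjection f‖ ^ 2 :=
        infSqDist_le_infSqDist_starProjection_add K hW.1 f
    _ ≤ worstSqDist (truncatedEllipsoid b lam d) W + lam d :=
        add_le_add
          (infSqDist_le_worstSqDist (fun g hg => norm_sq_le_of_mem_ellipsoid hpos hmono hg.1)
            ⟨starProjection_span_Iio_mem_ellipsoid hpos d hf, htail⟩)
          (norm_sub_starProjection_span_Iio_sq_le hpos hmono d hf)

end HilbertBasis

-- Indices are 0-based: `phi j` is `φ_{j+1}` and `lam j` is `λ_{j+1}`.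
theorem stmt17_general {H : Type*} [NormedAddCommGroup H] [InnerProductSpace ℝ H]
    [CompleteSpace H]
    (phi : ℕ → H) (hphi : Orthonormal ℝ phi)
    (htot : (Submodule.span ℝ (Set.range phi)).topologicalClosure = ⊤)
    (lam : ℕ → ℝ) (hpos : ∀ j, 0 < lam j) (hmono : Antitone lam)
    (hlim : Filter.Tendsto lam Filter.atTop (nhds 0))
    (r : ℕ) :
    let F : Set H := { f | (Summable fun j => ⟪f, phi j⟫ ^ 2 / lam j) ∧
        (∑' j, ⟪f, phi j⟫ ^ 2 / lam j) ≤ 1 }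
    let reg : ℝ := sInf { v : ℝ | ∃ W : Submodule ℝ H,
        Module.rank ℝ ↥W ≤ (r : Cardinal) ∧
        v = sSup { u : ℝ | ∃ f ∈ F,
            u = sInf { t : ℝ | ∃ w ∈ W, t = ‖f - w‖ ^ 2 } } }
    let regd : ℕ → ℝ := fun d => sInf { v : ℝ | ∃ W : Submodule ℝ H,
        W ≤ Submodule.span ℝ (phi '' Set.Iio d) ∧
        Module.rank ℝ ↥W ≤ (r : Cardinal) ∧
        v = sSup { u : ℝ | ∃ f ∈ F, (∀ j, d ≤ j → ⟪f, phi j⟫ = 0) ∧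
            u = sInf { t : ℝ | ∃ w ∈ W, t = ‖f - w‖ ^ 2 } } }
    (∀ d : ℕ, r < d → regd d ≤ reg ∧ reg ≤ regd d + lam d)
    ∧ Filter.Tendsto regd Filter.atTop (nhds reg) := by
  intro F reg regd
  obtain ⟨b, rfl⟩ : ∃ b : HilbertBasis ℕ ℝ H, ⇑b = phi :=
    ⟨_, HilbertBasis.coe_mk hphi htot.ge⟩
  have hreg : reg = minimaxSqDist (ellipsoid b lam) {W | Module.rank ℝ W ≤ r} := rfl
  have hregd : ∀ d, regd d = minimaxSqDist (truncatedEllipsoid b lam d)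
      {W | W ≤ Submodule.span ℝ (b '' Set.Iio d) ∧ Module.rank ℝ W ≤ r} := fun d => by
    simp only [regd, minimaxSqDist, worstSqDist, infSqDist, truncatedEllipsoid, Set.mem_inter_iff,
      Set.mem_ofPred_eq, and_assoc]
    rfl
  have hbounds : ∀ d, regd d ≤ reg ∧ reg ≤ regd d + lam d := fun d => by
    rw [hreg, hregd]
    exact ⟨b.minimaxSqDist_truncation_le hpos hmono d r,
      b.minimaxSqDist_le_truncation_add hpos hmono d r⟩
  refine ⟨fun d _ => hbounds d, ?_⟩
  have hlower : Filter.Tendsto (fun d => reg - lam d) Filter.atTop (nhds reg) := by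
    simpa using tendsto_const_nhds.sub hlim
  exact tendsto_of_tendsto_of_tendsto_of_le_of_le hlower tendsto_const_nhds
    (fun d => by linarith [(hbounds d).2]) (fun d => (hbounds d).1)

/-- Finite-dimensional approximation of the Hilbert-space minimax regret:
with `reg` the infimum over subspaces `W` with `dim W ≤ r` of
`sup_{f ∈ F} inf_{w ∈ W} ‖f − w‖²`, and `regd d` the same infimum restricted to subspaces
`W ⊆ span{φ_1,…,φ_d}` and to `f ∈ F` with `⟨f, φ_j⟩ = 0` for all `j > d` (0-based: `j ≥ d`),
one has `regd d ≤ reg ≤ regd d + λ_{d+1}` for every `d > r` (0-based: `λ_{d+1} = lam d`);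
consequently `reg = lim_{d→∞} regd d`. -/
theorem stmt17 {H : Type*} [NormedAddCommGroup H] [InnerProductSpace ℝ H]
    [CompleteSpace H]
    (phi : ℕ → H) (hphi : Orthonormal ℝ phi)
    (htot : (Submodule.span ℝ (Set.range phi)).topologicalClosure = ⊤)
    (lam : ℕ → ℝ) (hpos : ∀ j, 0 < lam j) (hmono : Antitone lam)
    (hlim : Filter.Tendsto lam Filter.atTop (nhds 0))
    (r : ℕ) (hr : 0 < r) :
    let F : Set H := { f | (Summable fun j => ⟪f, phi j⟫ ^ 2 / lam j) ∧
        (∑' j, ⟪f, phi j⟫ ^ 2 / lam j) ≤ 1 }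
    let reg : ℝ := sInf { v : ℝ | ∃ W : Submodule ℝ H,
        Module.rank ℝ ↥W ≤ (r : Cardinal) ∧
        v = sSup { u : ℝ | ∃ f ∈ F,
            u = sInf { t : ℝ | ∃ w ∈ W, t = ‖f - w‖ ^ 2 } } }
    let regd : ℕ → ℝ := fun d => sInf { v : ℝ | ∃ W : Submodule ℝ H,
        W ≤ Submodule.span ℝ (phi '' Set.Iio d) ∧
        Module.rank ℝ ↥W ≤ (r : Cardinal) ∧
        v = sSup { u : ℝ | ∃ f ∈ F, (∀ j, d ≤ j → ⟪f, phi j⟫ = 0) ∧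
            u = sInf { t : ℝ | ∃ w ∈ W, t = ‖f - w‖ ^ 2 } } }
    (∀ d : ℕ, r < d → regd d ≤ reg ∧ reg ≤ regd d + lam d)
    ∧ Filter.Tendsto regd Filter.atTop (nhds reg) :=
  stmt17_general phi hphi htot lam hpos hmono hlim r
end
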